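/- Let 𝔤 be a finite-dimensional real nilpotent Lie algebra with a nondegenerate symmetric bilinear form g, let 𝔞 be a finite-dimensional abelian real Lie algebra with orthonormal basis {e_α} and ε_α = ±1, and let 𝔤̃ = 𝔤 ⋊ 𝔞 be a semidirect sum in which 𝔤 is an ideal and 𝔞 a subalgebra, endowed with the orthogonal metric g̃ = g ⊕ Σ_α ε_α e^α ⊗ e^α. Set φ_α := −ad(e_α)|_𝔤 : 𝔤 → 𝔤, let φ_α* be its g-adjoint and φ_α^s = ½(φ_α + φ_α*). Define the Levi-Civita product ∇̃ on (𝔤̃, g̃) by the Koszul identity, the curvature R̃(x,y) = ∇̃_x∇̃_y − ∇̃_y∇̃_x − ∇̃_{[x,y]}, and the Ricci form r̃ic(x,y) = tr(z ↦ R̃(z,x)y). Then for all v ∈ 𝔤 and all α, β: r̃ic(v, e_α) = ½ Tr( (ad v)|_𝔤 ∘ φ_α* ) and r̃ic(e_α, e_β) = −Tr( φ_α^s ∘ φ_β ), where Tr is the trace on 𝔤. -/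

import Mathlib

/-!
If `y` is orthogonal to `[L, L]`, the Koszul formula makes `z ↦ ∇_z y` self-adjoint, while every
`∇_x` is skew-adjoint; so the term `tr (∇_x ∘ ∇_· y)` of `ric (x, y)` vanishes, and torsion-freeness
turns `tr (z ↦ ∇_z w)` into `-tr (ad w)`. Hence `ric (x, y) = tr (∇_{[x, ·]} y) - tr (ad (∇_x y))`.

In a standard decomposition every `e_α` is orthogonal to `[𝔤̃, 𝔤̃] ⊆ 𝔤`, and `∇_u e_α = φ_αˢ u` for
`u ∈ 𝔤`. Thus `∇_v e_α ∈ 𝔤`, whose `ad` is nilpotent, and `∇_{[x, ·]} e_β` takes values in `𝔤`, so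
its trace is the trace of `φ_βˢ ∘ ad v` resp. `-φ_βˢ ∘ φ_α` on `𝔤`. It remains to note that
`tr (ad v ∘ φ_α) = 0`, as `φ_α` is a derivation of the nilpotent `𝔤` and so preserves its lower
central series, and that `tr (φ_β* ∘ φ_α) = tr (φ_α* ∘ φ_β)` by passing to adjoints.
-/

/-- The Ricci form of the Koszul product `nabla` on a Lie algebra `L`:
`ricci nabla x y = tr (z ↦ R(z,x)y)` where `R(x,y) = ∇_x∇_y − ∇_y∇_x − ∇_{⁅x,y⁆}`. -/
noncomputable def ricci {L : Type*} [LieRing L] [LieAlgebra ℝ L]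
    (nabla : L →ₗ[ℝ] L →ₗ[ℝ] L) (x y : L) : ℝ :=
  LinearMap.trace ℝ L
    (nabla.flip (nabla x y) - nabla x ∘ₗ nabla.flip y + nabla.flip y ∘ₗ LieAlgebra.ad ℝ L x)

open LinearMap

namespace LinearMap

variable {K V : Type*} [Field K] [AddCommGroup V] [Module K V] [FiniteDimensional K V]
  {B : LinearMap.BilinForm K V}

theorem trace_eq_of_isAdjointPair (hB : B.Nondegenerate) {f g : V →ₗ[K] V}
    (h : IsAdjointPair B B f g) : trace K V f = trace K V g := by
  have hconj : f = (B.toDual hB).symm.conj (Module.Dual.transpose (R := K) g) := by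
    ext u
    apply (B.toDual hB).injective
    ext w
    simp [LinearEquiv.conj_apply, BilinForm.toDual_def, Module.Dual.transpose_apply, h u w]
  rw [hconj, trace_conj', trace_transpose']

theorem trace_eq_zero_of_isSkewAdjoint [CharZero K] (hB : B.Nondegenerate) {f : V →ₗ[K] V}
    (h : B.IsSkewAdjoint f) : trace K V f = 0 := by
  have htr := trace_eq_of_isAdjointPair hB (g := -f) h
  rw [map_neg] at htr
  exact self_eq_neg.mp htr

theorem trace_comp_eq_zero_of_isSkewAdjoint_of_isSelfAdjoint [CharZero K]
    (hB : B.Nondegenerate) {E S : V →ₗ[K] V} (hE : B.IsSkewAdjoint E)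
    (hS : B.IsSelfAdjoint S) : trace K V (E ∘ₗ S) = 0 := by
  have hadj : IsAdjointPair B B (E ∘ₗ S) ⇑(-(S ∘ₗ E)) := fun u w => by
    simpa using (IsAdjointPair.comp hS hE) u w
  have htr := trace_eq_of_isAdjointPair hB hadj
  rw [map_neg, trace_comp_comm' E S] at htr
  exact self_eq_neg.mp htr

theorem trace_comp_eq_of_isAdjointPair (hB : B.Nondegenerate) {f f' g g' : V →ₗ[K] V}
    (hf : IsAdjointPair B B f' f) (hg : IsAdjointPair B B g g') :
    trace K V (f' ∘ₗ g) = trace K V (g' ∘ₗ f) :=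
  trace_eq_of_isAdjointPair hB fun u w => by rw [comp_apply, comp_apply, hf, hg]

theorem trace_eq_of_forall_mem {M : Type*} [AddCommGroup M] [Module K M] [FiniteDimensional K M]
    (p : Submodule K M) {T : M →ₗ[K] M} {S : p →ₗ[K] p} (hT : ∀ x, T x ∈ p)
    (hS : ∀ u : p, (S u : M) = T u) : trace K M T = trace K p S := by
  rw [← trace_restrict_eq_of_forall_mem p T hT]
  congr 1
  ext u
  simp [hS]

end LinearMap

namespace LieAlgebra

variable {K L : Type*} [Field K] [LieRing L] [LieAlgebra K L]

theorem apply_mem_lowerCentralSeries_of_derivation {D : L →ₗ[K] L}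
    (hD : ∀ x y : L, D ⁅x, y⁆ = ⁅D x, y⁆ + ⁅x, D y⁆) (k : ℕ) {x : L}
    (hx : x ∈ LieModule.lowerCentralSeries K L L k) :
    D x ∈ LieModule.lowerCentralSeries K L L k := by
  induction k generalizing x with
  | zero => simp
  | succ k ih =>
    rw [LieModule.lowerCentralSeries_succ, ← LieSubmodule.mem_toSubmodule,
      LieSubmodule.lieIdeal_oper_eq_linear_span'] at hx ⊢
    refine Submodule.span_induction ?_ (by simp) (fun a b _ _ ha hb => ?_)
      (fun t a _ ha => ?_) hx
    · rintro - ⟨a, -, b, hb, rfl⟩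
      rw [hD]
      exact add_mem (Submodule.subset_span ⟨D a, trivial, b, hb, rfl⟩)
        (Submodule.subset_span ⟨a, trivial, D b, ih hb, rfl⟩)
    · rw [map_add]; exact add_mem ha hb
    · rw [map_smul]; exact Submodule.smul_mem _ t ha

theorem trace_ad_comp_derivation_eq_zero [LieRing.IsNilpotent L] {D : L →ₗ[K] L}
    (hD : ∀ x y : L, D ⁅x, y⁆ = ⁅D x, y⁆ + ⁅x, D y⁆) (v : L) :
    trace K L (ad K L v ∘ₗ D) = 0 := by
  have hpow : ∀ (k : ℕ) (x : L),
      ((ad K L v ∘ₗ D) ^ k) x ∈ LieModule.lowerCentralSeries K L L k := by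
    intro k
    induction k with
    | zero => simp
    | succ k ih =>
      intro x
      rw [pow_succ', Module.End.mul_apply, LieModule.lowerCentralSeries_succ]
      exact LieSubmodule.lie_mem_lie (LieSubmodule.mem_top v)
        (apply_mem_lowerCentralSeries_of_derivation hD k (ih x))
  obtain ⟨n, hn⟩ := (LieModule.isNilpotent_iff K L L).mp inferInstance
  refine (isNilpotent_trace_of_isNilpotent ⟨n, ?_⟩).eq_zero
  ext x
  simpa [hn] using hpow n x

theorem trace_ad_eq_zero_of_mem [FiniteDimensional K L] {I : LieIdeal K L}
    [LieRing.IsNilpotent I] {w : L} (hw : w ∈ I) : trace K L (ad K L w) = 0 := by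
  rw [trace_eq_of_forall_mem I.toSubmodule (S := ad K I ⟨w, hw⟩)
    (lie_mem_left K L I w · hw) fun _ => rfl]
  exact (isNilpotent_trace_of_isNilpotent
    (LieModule.isNilpotent_toEnd_of_isNilpotent K I I ⟨w, hw⟩)).eq_zero

end LieAlgebra

theorem LieIdeal.leibniz_of_coe_eq_neg_lie {K L : Type*} [Field K] [LieRing L]
    [LieAlgebra K L] {I : LieIdeal K L} {y : L} {φ : I →ₗ[K] I}
    (hφ : ∀ v : I, (φ v : L) = -⁅y, (v : L)⁆) (x z : I) : φ ⁅x, z⁆ = ⁅φ x, z⁆ + ⁅x, φ z⁆ := by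
  apply Subtype.ext
  change (φ ⁅x, z⁆ : L) = ⁅(φ x : L), (z : L)⁆ + ⁅(x : L), (φ z : L)⁆
  rw [hφ, hφ, hφ, show ((⁅x, z⁆ : I) : L) = ⁅(x : L), (z : L)⁆ from rfl, neg_lie,
    lie_neg, leibniz_lie]
  abel

section Koszul

variable {K L : Type*} [Field K] [LieRing L] [LieAlgebra K L]

def IsKoszulProduct (B : LinearMap.BilinForm K L) (nabla : L →ₗ[K] L →ₗ[K] L) : Prop :=
  ∀ x y z, 2 * B (nabla x y) z = B ⁅x, y⁆ z - B ⁅y, z⁆ x + B ⁅z, x⁆ y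

namespace IsKoszulProduct

variable {B : LinearMap.BilinForm K L} {nabla : L →ₗ[K] L →ₗ[K] L}

theorem isSkewAdjoint [CharZero K] (hK : IsKoszulProduct B nabla) (hBs : B.IsSymm) (x : L) :
    B.IsSkewAdjoint (nabla x) := fun y z => by
  have h₁ := hK x y z
  have h₂ := hK x z y
  rw [← lie_skew x z, ← lie_skew z y, ← lie_skew y x] at h₂
  simp only [map_neg, LinearMap.neg_apply, Pi.neg_apply] at h₂ ⊢
  rw [← hBs.eq (nabla x z) y]
  linear_combination (h₁ + h₂) / 2

theorem sub_eq_lie [CharZero K] (hK : IsKoszulProduct B nabla) (hB : B.Nondegenerate)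
    (x y : L) : nabla x y - nabla y x = ⁅x, y⁆ := by
  refine sub_eq_zero.mp (hB.1 _ fun z => ?_)
  have h₁ := hK x y z
  have h₂ := hK y x z
  rw [← lie_skew y x, ← lie_skew x z, ← lie_skew z y] at h₂
  simp only [map_neg, LinearMap.neg_apply, map_sub, LinearMap.sub_apply] at h₂ ⊢
  linear_combination (h₁ - h₂) / 2

theorem flip_eq [CharZero K] (hK : IsKoszulProduct B nabla) (hB : B.Nondegenerate) (y : L) :
    nabla.flip y = nabla y - LieAlgebra.ad K L y := by
  ext z
  rw [flip_apply, LinearMap.sub_apply, LieAlgebra.ad_apply, ← lie_skew, sub_neg_eq_add,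
    ← hK.sub_eq_lie hB z y, add_sub_cancel]

theorem trace_flip [CharZero K] [FiniteDimensional K L] (hK : IsKoszulProduct B nabla)
    (hBs : B.IsSymm) (hB : B.Nondegenerate) (y : L) :
    trace K L (nabla.flip y) = -trace K L (LieAlgebra.ad K L y) := by
  rw [hK.flip_eq hB, map_sub, trace_eq_zero_of_isSkewAdjoint hB (hK.isSkewAdjoint hBs y),
    zero_sub]

theorem two_mul_apply_flip_of_orthogonal (hK : IsKoszulProduct B nabla) {y : L}
    (hy : ∀ a b : L, B ⁅a, b⁆ y = 0) (z z' : L) :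
    2 * B (nabla z y) z' = B ⁅z, y⁆ z' + B ⁅z', y⁆ z := by
  rw [hK, hy, ← lie_skew z' y, map_neg, LinearMap.neg_apply]
  ring

theorem flip_isSelfAdjoint_of_orthogonal [CharZero K] (hK : IsKoszulProduct B nabla)
    (hBs : B.IsSymm) {y : L} (hy : ∀ a b : L, B ⁅a, b⁆ y = 0) :
    B.IsSelfAdjoint (nabla.flip y) := fun z z' => by
  rw [flip_apply, flip_apply, ← hBs.eq (nabla z' y)]
  refine mul_left_cancel₀ (two_ne_zero (α := K)) ?_
  rw [hK.two_mul_apply_flip_of_orthogonal hy, hK.two_mul_apply_flip_of_orthogonal hy, add_comm]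

theorem apply_eq_zero_of_orthogonal [CharZero K] (hK : IsKoszulProduct B nabla)
    (hB : B.Nondegenerate) {x y : L} (hx : ∀ a b : L, B ⁅a, b⁆ x = 0)
    (hy : ∀ a b : L, B ⁅a, b⁆ y = 0) (hxy : ⁅x, y⁆ = 0) : nabla x y = 0 :=
  hB.1 _ fun z => mul_left_cancel₀ (two_ne_zero (α := K)) <| by
    rw [hK, hxy, hx, hy]; simp

end IsKoszulProduct

end Koszul

theorem ricci_eq_of_orthogonal {L : Type*} [LieRing L] [LieAlgebra ℝ L] [FiniteDimensional ℝ L]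
    {B : LinearMap.BilinForm ℝ L} {nabla : L →ₗ[ℝ] L →ₗ[ℝ] L} (hK : IsKoszulProduct B nabla)
    (hBs : B.IsSymm) (hB : B.Nondegenerate) {y : L} (hy : ∀ a b : L, B ⁅a, b⁆ y = 0) (x : L) :
    ricci nabla x y = trace ℝ L (nabla.flip y ∘ₗ LieAlgebra.ad ℝ L x)
      - trace ℝ L (LieAlgebra.ad ℝ L (nabla x y)) := by
  rw [ricci, map_add, map_sub, hK.trace_flip hBs hB,
    trace_comp_eq_zero_of_isSkewAdjoint_of_isSelfAdjoint hB (hK.isSkewAdjoint hBs x)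
      (hK.flip_isSelfAdjoint_of_orthogonal hBs hy)]
  ring

structure IsStandardDecomposition {K L ι : Type*} [Field K] [LieRing L] [LieAlgebra K L]
    (B : LinearMap.BilinForm K L) (G : LieIdeal K L) (e : ι → L) : Prop where
  sup_eq_top : G.toSubmodule ⊔ Submodule.span K (Set.range e) = ⊤
  lie_eq_zero : ∀ α β, ⁅e α, e β⁆ = 0
  orthogonal : ∀ v ∈ G, ∀ α, B v (e α) = 0

namespace IsStandardDecomposition

section

variable {K L ι : Type*} [Field K] [LieRing L] [LieAlgebra K L]
  {B : LinearMap.BilinForm K L} {G : LieIdeal K L} {e : ι → L}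

theorem lie_mem (hD : IsStandardDecomposition B G e) (a b : L) : ⁅a, b⁆ ∈ G := by
  set A := Submodule.span K (Set.range e)
  have hA : ∀ x ∈ A, ∀ y ∈ A, ⁅x, y⁆ = 0 := by
    intro x hx y hy
    induction hx using Submodule.span_induction with
    | mem x hx =>
      obtain ⟨α, rfl⟩ := hx
      induction hy using Submodule.span_induction with
      | mem y hy => obtain ⟨β, rfl⟩ := hy; exact hD.lie_eq_zero α β
      | zero => simp
      | add y z _ _ hy hz => simp [hy, hz]
      | smul t y _ hy => simp [hy]
    | zero => simp
    | add x z _ _ hx hz => simp [add_lie, hx, hz]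
    | smul t x _ hx => simp [hx]
  have hdecomp : ∀ z : L, ∃ g ∈ G.toSubmodule, ∃ x ∈ A, g + x = z := fun z =>
    Submodule.mem_sup.mp (hD.sup_eq_top ▸ Submodule.mem_top)
  obtain ⟨g, hg, x, hx, rfl⟩ := hdecomp a
  obtain ⟨g', hg', x', hx', rfl⟩ := hdecomp b
  rw [add_lie, lie_add x, hA x hx x' hx', add_zero]
  exact add_mem (lie_mem_left K L G _ _ hg) (lie_mem_right K L G _ _ hg')

theorem apply_lie_eq_zero (hD : IsStandardDecomposition B G e) (α : ι) (a b : L) :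
    B ⁅a, b⁆ (e α) = 0 :=
  hD.orthogonal _ (hD.lie_mem a b) α

theorem ext (hD : IsStandardDecomposition B G e) (hB : B.Nondegenerate) {x y : L}
    (hG : ∀ w ∈ G, B x w = B y w) (he : ∀ α, B x (e α) = B y (e α)) : x = y := by
  refine sub_eq_zero.mp (hB.1 _ fun z => ?_)
  have hle : G.toSubmodule ⊔ Submodule.span K (Set.range e) ≤ LinearMap.ker (B (x - y)) :=
    sup_le (fun w hw => by simp [hG w hw])
      (Submodule.span_le.mpr <| by rintro - ⟨α, rfl⟩; simp [he α])
  exact hle (hD.sup_eq_top ▸ Submodule.mem_top)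

theorem nabla_coe_e [CharZero K] (hD : IsStandardDecomposition B G e)
    {nabla : L →ₗ[K] L →ₗ[K] L} (hK : IsKoszulProduct B nabla) (hBs : B.IsSymm)
    (hB : B.Nondegenerate) {α : ι} {φ φs : G →ₗ[K] G}
    (hφ : ∀ v : G, (φ v : L) = -⁅e α, (v : L)⁆) (hφs : ∀ v w : G, B (φs v) w = B v (φ w))
    (u : G) : nabla u (e α) = ((1 / 2 : K) • (φ + φs)) u := by
  have hlie : ∀ v : G, ⁅(v : L), e α⁆ = φ v := fun v => by rw [hφ, lie_skew]
  have htwo := hK.two_mul_apply_flip_of_orthogonal (hD.apply_lie_eq_zero α)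
  refine hD.ext hB (fun w hw => mul_left_cancel₀ (two_ne_zero (α := K)) ?_)
    (fun β => mul_left_cancel₀ (two_ne_zero (α := K)) ?_)
  · rw [htwo, hlie u, show ⁅w, e α⁆ = φ ⟨w, hw⟩ from hlie ⟨w, hw⟩,
      hBs.eq (φ ⟨w, hw⟩ : L), ← hφs u ⟨w, hw⟩]
    simp only [LinearMap.smul_apply, LinearMap.add_apply, SetLike.val_smul,
      LieSubmodule.coe_add, map_add, map_smul, LinearMap.add_apply, LinearMap.smul_apply,
      smul_eq_mul]
    ring
  · rw [htwo, hD.apply_lie_eq_zero β, hD.lie_eq_zero β α, map_zero, LinearMap.zero_apply,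
      hD.orthogonal _ (SetLike.coe_mem _) β, add_zero, mul_zero]

end

section Real

variable {L ι : Type*} [LieRing L] [LieAlgebra ℝ L] [FiniteDimensional ℝ L]
  {B : LinearMap.BilinForm ℝ L} {G : LieIdeal ℝ L} {e : ι → L} {nabla : L →ₗ[ℝ] L →ₗ[ℝ] L}
  {φ φs : ι → (G →ₗ[ℝ] G)}

theorem ricci_coe_e (hD : IsStandardDecomposition B G e) [LieRing.IsNilpotent G]
    (hK : IsKoszulProduct B nabla) (hBs : B.IsSymm) (hB : B.Nondegenerate)
    (hφ : ∀ α (v : G), (φ α v : L) = -⁅e α, (v : L)⁆)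
    (hφs : ∀ α (v w : G), B (φs α v) w = B v (φ α w)) (v : G) (α : ι) :
    ricci nabla v (e α) = (1 / 2 : ℝ) * trace ℝ G (LieAlgebra.ad ℝ G v ∘ₗ φs α) := by
  have hnabla := hD.nabla_coe_e hK hBs hB (hφ α) (hφs α)
  have htrace : trace ℝ L (nabla.flip (e α) ∘ₗ LieAlgebra.ad ℝ L v)
      = trace ℝ G (((1 / 2 : ℝ) • (φ α + φs α)) ∘ₗ LieAlgebra.ad ℝ G v) :=
    trace_eq_of_forall_mem G.toSubmodule
      (fun x => by
        rw [comp_apply, flip_apply, LieAlgebra.ad_apply,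
          show ⁅(v : L), x⁆ = ((⟨_, lie_mem_left ℝ L G _ x v.2⟩ : G) : L) from rfl,
          hnabla]
        exact SetLike.coe_mem _)
      (fun u => (hnabla ⁅v, u⁆).symm)
  rw [ricci_eq_of_orthogonal hK hBs hB (hD.apply_lie_eq_zero α), hnabla,
    LieAlgebra.trace_ad_eq_zero_of_mem (SetLike.coe_mem _), sub_zero, htrace, trace_comp_comm',
    comp_smul, map_smul, comp_add, map_add,
    LieAlgebra.trace_ad_comp_derivation_eq_zero (LieIdeal.leibniz_of_coe_eq_neg_lie (hφ α)),
    zero_add, smul_eq_mul]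

theorem ricci_e_e (hD : IsStandardDecomposition B G e) (hK : IsKoszulProduct B nabla)
    (hBs : B.IsSymm) (hB : B.Nondegenerate) (hBG : (B.restrict G.toSubmodule).Nondegenerate)
    (hφ : ∀ α (v : G), (φ α v : L) = -⁅e α, (v : L)⁆)
    (hφs : ∀ α (v w : G), B (φs α v) w = B v (φ α w)) (α β : ι) :
    ricci nabla (e α) (e β) = -trace ℝ G ((((1 : ℝ) / 2) • (φ α + φs α)) ∘ₗ φ β) := by
  have hnabla := hD.nabla_coe_e hK hBs hB (hφ β) (hφs β)
  have htrace : trace ℝ L (nabla.flip (e β) ∘ₗ LieAlgebra.ad ℝ L (e α))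
      = trace ℝ G (((1 / 2 : ℝ) • (φ β + φs β)) ∘ₗ (-φ α)) :=
    trace_eq_of_forall_mem G.toSubmodule
      (fun x => by
        rw [comp_apply, flip_apply, LieAlgebra.ad_apply,
          show ⁅e α, x⁆ = ((⟨_, hD.lie_mem (e α) x⟩ : G) : L) from rfl, hnabla]
        exact SetLike.coe_mem _)
      (fun u => by
        change _ = nabla ⁅e α, (u : L)⁆ (e β)
        rw [show ⁅e α, (u : L)⁆ = ((-φ α u : G) : L) by simp [hφ], hnabla]
        rfl)
  have hadjβ : IsAdjointPair (B.restrict G.toSubmodule) (B.restrict G.toSubmodule)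
      (φs β) (φ β) := hφs β
  have hadjα : IsAdjointPair (B.restrict G.toSubmodule) (B.restrict G.toSubmodule)
      (φ α) (φs α) := fun v w => by
    change B (φ α v : L) w = B v (φs α w : L)
    rw [hBs.eq, ← hφs, hBs.eq]
  rw [ricci_eq_of_orthogonal hK hBs hB (hD.apply_lie_eq_zero β),
    hK.apply_eq_zero_of_orthogonal hB (hD.apply_lie_eq_zero α) (hD.apply_lie_eq_zero β)
      (hD.lie_eq_zero α β), map_zero, map_zero, sub_zero, htrace, comp_neg, map_neg, neg_inj,
    smul_comp, smul_comp, map_smul, map_smul, add_comp, add_comp, map_add, map_add,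
    trace_comp_comm' (φ α) (φ β)]
  congr 2
  exact trace_comp_eq_of_isAdjointPair hBG hadjβ hadjα

end Real

end IsStandardDecomposition

theorem stmt_9 (L : Type*) [LieRing L] [LieAlgebra ℝ L] [FiniteDimensional ℝ L]
    (Btilde : LinearMap.BilinForm ℝ L) (hBsymm : ∀ x y : L, Btilde x y = Btilde y x)
    (hBnondeg : Btilde.Nondegenerate)
    (G : LieIdeal ℝ L) (hGnilp : LieRing.IsNilpotent ↥G)
    (hGnondeg : ∀ v ∈ G, (∀ w ∈ G, Btilde v w = 0) → v = 0)
    (k : ℕ) (e : Fin k → L)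
    (hsup : G.toSubmodule ⊔ Submodule.span ℝ (Set.range e) = ⊤)
    (hAabelian : ∀ α β, ⁅e α, e β⁆ = 0)
    (horth : ∀ v ∈ G, ∀ α, Btilde v (e α) = 0)
    (φ : Fin k → (↥G →ₗ[ℝ] ↥G)) (hφ : ∀ α (v : ↥G), ((φ α v : L)) = -⁅e α, (v : L)⁆)
    (φs : Fin k → (↥G →ₗ[ℝ] ↥G))
    (hφs : ∀ α (v w : ↥G), Btilde (φs α v : L) (w : L) = Btilde (v : L) (φ α w : L))
    (nabla : L →ₗ[ℝ] L →ₗ[ℝ] L)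
    (hKoszul : ∀ x y z : L,
      2 * Btilde (nabla x y) z = Btilde ⁅x, y⁆ z - Btilde ⁅y, z⁆ x + Btilde ⁅z, x⁆ y) :
    (∀ (v : ↥G) (α : Fin k),
      ricci nabla (v : L) (e α)
        = (1/2 : ℝ) * LinearMap.trace ℝ ↥G (LieAlgebra.ad ℝ ↥G v ∘ₗ φs α)) ∧
    (∀ α β : Fin k,
      ricci nabla (e α) (e β)
        = -LinearMap.trace ℝ ↥G ((((1:ℝ)/2) • (φ α + φs α)) ∘ₗ φ β)) := by
  have := hGnilp
  have hD : IsStandardDecomposition Btilde G e := ⟨hsup, hAabelian, horth⟩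
  have hBs : Btilde.IsSymm := ⟨hBsymm⟩
  have hBG : (Btilde.restrict G.toSubmodule).Nondegenerate :=
    ⟨fun u hu => Subtype.ext (hGnondeg u u.2 fun w hw => hu ⟨w, hw⟩),
      fun u hu => Subtype.ext (hGnondeg u u.2 fun w hw => (hBsymm _ _).trans (hu ⟨w, hw⟩))⟩
  exact ⟨hD.ricci_coe_e hKoszul hBs hBnondeg hφ hφs,
    hD.ricci_e_e hKoszul hBs hBnondeg hBG hφ hφs⟩
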